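/- arXiv:2506.19737 — 3 statements merged into one kernel-verified Lean document; each statement's English description precedes it below -/
import Mathlib

section
/- L-rationalizability respects n-rationalizability: fix an anchor p; for every order n ≥ 0, every level k ≥ n, and every player i, the set of n-L-rationalizable actions of type θ_{i,k} is contained in R^n_i, the set of actions surviving n rounds of iterated elimination of strictly dominated actions in the complete-information game. -/
open Finset

/-- A probability distribution (as weights) on a finite set. -/
def IsDist {B : Type} [Fintype B] (ν : B → ℝ) : Prop :=
  (∀ b, 0 ≤ ν b) ∧ ∑ b, ν b = 1

/-- `a` is a best reply to the conjecture `ν` (weights on the co-player's actions). -/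
def isBR {A B : Type} [Fintype A] [Fintype B] (u : A → B → ℝ) (ν : B → ℝ) (a : A) : Prop :=
  ∀ a' : A, ∑ b, ν b * u a' b ≤ ∑ b, ν b * u a b

/-- `a` is strictly dominated by some mixed action. -/
def Dominated {A B : Type} [Fintype A] [Fintype B] (u : A → B → ℝ) (a : A) : Prop :=
  ∃ α : A → ℝ, IsDist α ∧ ∀ b : B, (∑ a', α a' * u a' b) > u a b

/-- One step of iterated elimination: best replies (within `S`) to conjectures on `T`. -/
def BRstep {A B : Type} [Fintype A] [Fintype B] (u : A → B → ℝ) (S : Set A) (T : Set B) :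
    Set A :=
  {a | a ∈ S ∧ ∃ ν : B → ℝ, IsDist ν ∧ (∀ b, ν b ≠ 0 → b ∈ T) ∧ isBR u ν a}

/-- `n`-rationalizability in the complete-information game. -/
def Rseq {A B : Type} [Fintype A] [Fintype B] (u1 : A → B → ℝ) (u2 : B → A → ℝ) :
    ℕ → Set A × Set B
  | 0 => (Set.univ, Set.univ)
  | n + 1 =>
    (BRstep u1 (Rseq u1 u2 n).1 (Rseq u1 u2 n).2,
     BRstep u2 (Rseq u1 u2 n).2 (Rseq u1 u2 n).1)

/-- Best replies to conjectures concentrated on `T`. -/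
def Lstep {A B : Type} [Fintype A] [Fintype B] (u : A → B → ℝ) (T : Set B) : Set A :=
  {a | ∃ ν : B → ℝ, IsDist ν ∧ (∀ b, ν b ≠ 0 → b ∈ T) ∧ isBR u ν a}

/-- The classic level-k solution under anchor `(p1, p2)`; `Lk … k` is level-`k` behavior
(meaningful for `k ≥ 1`). -/
def Lk {A B : Type} [Fintype A] [Fintype B] (u1 : A → B → ℝ) (u2 : B → A → ℝ)
    (p1 : A → ℝ) (p2 : B → ℝ) : ℕ → Set A × Set B
  | 0 => (Set.univ, Set.univ)
  | 1 => ({a | isBR u1 p2 a}, {b | isBR u2 p1 b})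
  | k + 2 =>
    (Lstep u1 (Lk u1 u2 p1 p2 (k + 1)).2,
     Lstep u2 (Lk u1 u2 p1 p2 (k + 1)).1)

/-- A Ĝ-conjecture over the co-player's (level-type, action) pairs: a finitely supported
type-marginal together with conditional action distributions. -/
structure GConj (B : Type) [Fintype B] where
  m : ℕ →₀ ℝ
  m_nonneg : ∀ t, 0 ≤ m t
  m_sum : (m.sum fun _ w => w) = 1
  cond : ℕ → B → ℝ
  cond_dist : ∀ t, IsDist (cond t)

/-- Marginal of a Ĝ-conjecture on the co-player's actions. -/
noncomputable def margAct {B : Type} [Fintype B] (μ : GConj B) : B → ℝ :=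
  fun b => μ.m.sum fun t w => w * μ.cond t b

/-- (K1): conditional on the co-player being of type 0 (if deemed possible),
play follows the anchor `q`. -/
def K1 {B : Type} [Fintype B] (q : B → ℝ) (μ : GConj B) : Prop :=
  μ.m 0 ≠ 0 → μ.cond 0 = q

/-- (K2): only co-player types strictly below `k` are deemed possible. -/
def K2 {B : Type} [Fintype B] (k : ℕ) (μ : GConj B) : Prop :=
  ∀ t, μ.m t ≠ 0 → t < k

/-- (KL): only the co-player type `k - 1` is deemed possible. -/
def KL {B : Type} [Fintype B] (k : ℕ) (μ : GConj B) : Prop :=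
  ∀ t, μ.m t ≠ 0 → t = k - 1

/-- Truncation `f^k` of the level distribution `f` at `k`. -/
noncomputable def ftrunc (f : ℕ → ℝ) (k t : ℕ) : ℝ :=
  f t / ∑ t' ∈ Finset.range k, f t'

/-- (KC): the type-marginal equals the truncation of `f` at `k`. -/
def KC {B : Type} [Fintype B] (f : ℕ → ℝ) (k : ℕ) (μ : GConj B) : Prop :=
  ∀ t < k, μ.m t = ftrunc f k t

/-- A full-support level distribution on ℕ. -/
def FullDist (f : ℕ → ℝ) : Prop :=
  (∀ t, 0 < f t) ∧ HasSum f 1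

/-- One step of Δ-rationalizability for one player, under belief restrictions `Δ`
(type-0 pairs always survive, since type-0 payoffs are constant). -/
def Dstep {A B : Type} [Fintype A] [Fintype B] (u : A → B → ℝ)
    (Δ : ℕ → GConj B → Prop) (S : Set (ℕ × A)) (T : Set (ℕ × B)) : Set (ℕ × A) :=
  {x | x ∈ S ∧ (x.1 = 0 ∨ ∃ μ : GConj B, Δ x.1 μ ∧
      (∀ t b, μ.m t ≠ 0 → μ.cond t b ≠ 0 → (t, b) ∈ T) ∧ isBR u (margAct μ) x.2)}

/-- Δ-rationalizability in the derived game with payoff uncertainty. -/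
def DeltaRat {A B : Type} [Fintype A] [Fintype B] (u1 : A → B → ℝ) (u2 : B → A → ℝ)
    (Δ1 : ℕ → GConj B → Prop) (Δ2 : ℕ → GConj A → Prop) :
    ℕ → Set (ℕ × A) × Set (ℕ × B)
  | 0 => (Set.univ, Set.univ)
  | n + 1 =>
    (Dstep u1 Δ1 (DeltaRat u1 u2 Δ1 Δ2 n).1 (DeltaRat u1 u2 Δ1 Δ2 n).2,
     Dstep u2 Δ2 (DeltaRat u1 u2 Δ1 Δ2 n).2 (DeltaRat u1 u2 Δ1 Δ2 n).1)

/-- Belief restrictions for downward rationalizability: (K1) and (K2). -/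
def DownR {B : Type} [Fintype B] (q : B → ℝ) : ℕ → GConj B → Prop :=
  fun k μ => K1 q μ ∧ K2 k μ

/-- Belief restrictions for L-rationalizability: (K1), (K2) and (KL). -/
def LR {B : Type} [Fintype B] (q : B → ℝ) : ℕ → GConj B → Prop :=
  fun k μ => K1 q μ ∧ K2 k μ ∧ KL k μ

/-- Belief restrictions for C-rationalizability: (K1), (K2) and (KC). -/
def CR {B : Type} [Fintype B] (q : B → ℝ) (f : ℕ → ℝ) : ℕ → GConj B → Prop :=
  fun k μ => K1 q μ ∧ K2 k μ ∧ KC f k μ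

section Sets

variable {A B : Type} [Fintype A] [Fintype B]

/-- `n`-downward-rationalizable actions of player 1's type `θ_{1,k}`. -/
def DSet (u1 : A → B → ℝ) (u2 : B → A → ℝ) (p1 : A → ℝ) (p2 : B → ℝ) (n k : ℕ) : Set A :=
  {a | (k, a) ∈ (DeltaRat u1 u2 (DownR p2) (DownR p1) n).1}

/-- `n`-downward-rationalizable actions of player 2's type `θ_{2,k}`. -/
def DSet2 (u1 : A → B → ℝ) (u2 : B → A → ℝ) (p1 : A → ℝ) (p2 : B → ℝ) (n k : ℕ) : Set B :=
  {b | (k, b) ∈ (DeltaRat u1 u2 (DownR p2) (DownR p1) n).2}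

def DSetInf (u1 : A → B → ℝ) (u2 : B → A → ℝ) (p1 : A → ℝ) (p2 : B → ℝ) (k : ℕ) : Set A :=
  ⋂ n, DSet u1 u2 p1 p2 n k

def DSet2Inf (u1 : A → B → ℝ) (u2 : B → A → ℝ) (p1 : A → ℝ) (p2 : B → ℝ) (k : ℕ) : Set B :=
  ⋂ n, DSet2 u1 u2 p1 p2 n k

/-- `n`-L-rationalizable actions of player 1's type `θ_{1,k}`. -/
def LSet (u1 : A → B → ℝ) (u2 : B → A → ℝ) (p1 : A → ℝ) (p2 : B → ℝ) (n k : ℕ) : Set A :=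
  {a | (k, a) ∈ (DeltaRat u1 u2 (LR p2) (LR p1) n).1}

/-- `n`-L-rationalizable actions of player 2's type `θ_{2,k}`. -/
def LSet2 (u1 : A → B → ℝ) (u2 : B → A → ℝ) (p1 : A → ℝ) (p2 : B → ℝ) (n k : ℕ) : Set B :=
  {b | (k, b) ∈ (DeltaRat u1 u2 (LR p2) (LR p1) n).2}

def LSetInf (u1 : A → B → ℝ) (u2 : B → A → ℝ) (p1 : A → ℝ) (p2 : B → ℝ) (k : ℕ) : Set A :=
  ⋂ n, LSet u1 u2 p1 p2 n k

def LSet2Inf (u1 : A → B → ℝ) (u2 : B → A → ℝ) (p1 : A → ℝ) (p2 : B → ℝ) (k : ℕ) : Set B :=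
  ⋂ n, LSet2 u1 u2 p1 p2 n k

/-- `n`-C-rationalizable actions of player 1's type `θ_{1,k}`. -/
def CSet (u1 : A → B → ℝ) (u2 : B → A → ℝ) (p1 : A → ℝ) (p2 : B → ℝ) (f : ℕ → ℝ)
    (n k : ℕ) : Set A :=
  {a | (k, a) ∈ (DeltaRat u1 u2 (CR p2 f) (CR p1 f) n).1}

/-- `n`-C-rationalizable actions of player 2's type `θ_{2,k}`. -/
def CSet2 (u1 : A → B → ℝ) (u2 : B → A → ℝ) (p1 : A → ℝ) (p2 : B → ℝ) (f : ℕ → ℝ)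
    (n k : ℕ) : Set B :=
  {b | (k, b) ∈ (DeltaRat u1 u2 (CR p2 f) (CR p1 f) n).2}

/-- The Cognitive Hierarchy solution: `CHsol … k` is CH level-`k` behavior (`k ≥ 1`). -/
def CHsol (u1 : A → B → ℝ) (u2 : B → A → ℝ) (p1 : A → ℝ) (p2 : B → ℝ) (f : ℕ → ℝ) :
    ℕ → Set A × Set B
  | 0 => (Set.univ, Set.univ)
  | 1 => ({a | isBR u1 p2 a}, {b | isBR u2 p1 b})
  | k + 2 =>
    ({a | ∃ μ : GConj B, K2 (k + 2) μ ∧ KC f (k + 2) μ ∧ K1 p2 μ ∧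
        (∀ t, 0 < t → ∀ _ : t < k + 2, ∀ b, μ.m t ≠ 0 → μ.cond t b ≠ 0 →
          b ∈ (CHsol u1 u2 p1 p2 f t).2) ∧
        isBR u1 (margAct μ) a},
     {b | ∃ μ : GConj A, K2 (k + 2) μ ∧ KC f (k + 2) μ ∧ K1 p1 μ ∧
        (∀ t, 0 < t → ∀ _ : t < k + 2, ∀ a, μ.m t ≠ 0 → μ.cond t a ≠ 0 →
          a ∈ (CHsol u1 u2 p1 p2 f t).1) ∧
        isBR u2 (margAct μ) b})
  termination_by k => k

end Sets

/-!
Under (KL) a conjecture of type `θ_{i,k+1}` weighs only co-player type `k`, so its action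
marginal is a conjecture concentrated on the co-player's `n`-L-rationalizable actions of type
`k`. Hence each round of L-rationalizability at level `k + 1` is a round of elimination of
never-best replies, and by induction on `n` (lowering the level by one per round, which
`n ≤ k` permits without ever reaching type 0) the `n`-L-rationalizable actions lie in `R^n`.
-/

lemma margAct_isDist {B : Type} [Fintype B] (μ : GConj B) : IsDist (margAct μ) := by
  refine ⟨fun b => Finset.sum_nonneg fun t _ => mul_nonneg (μ.m_nonneg t) ((μ.cond_dist t).1 b),
    ?_⟩
  calc ∑ b, margAct μ b = ∑ t ∈ μ.m.support, ∑ b, μ.m t * μ.cond t b := Finset.sum_comm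
    _ = ∑ t ∈ μ.m.support, μ.m t := by
        refine Finset.sum_congr rfl fun t _ => ?_
        rw [← Finset.mul_sum, (μ.cond_dist t).2, mul_one]
    _ = 1 := μ.m_sum

lemma exists_of_margAct_ne_zero {B : Type} [Fintype B] {μ : GConj B} {b : B}
    (hb : margAct μ b ≠ 0) : ∃ t, μ.m t ≠ 0 ∧ μ.cond t b ≠ 0 := by
  obtain ⟨t, -, ht⟩ := Finset.exists_ne_zero_of_sum_ne_zero hb
  exact ⟨t, mul_ne_zero_iff.mp ht⟩

lemma BRstep_mono {A B : Type} [Fintype A] [Fintype B] {u : A → B → ℝ} {S S' : Set A}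
    {T T' : Set B} (hS : S ⊆ S') (hT : T ⊆ T') : BRstep u S T ⊆ BRstep u S' T' :=
  fun _ ⟨ha, ν, hν, hsupp, hbr⟩ => ⟨hS ha, ν, hν, fun b hb => hT (hsupp b hb), hbr⟩

lemma mem_BRstep_of_mem_Dstep {A B : Type} [Fintype A] [Fintype B] {u : A → B → ℝ}
    {Δ : ℕ → GConj B → Prop} {S : Set (ℕ × A)} {T : Set (ℕ × B)} {k : ℕ} {a : A}
    (hΔ : ∀ μ, Δ (k + 1) μ → KL (k + 1) μ) (h : (k + 1, a) ∈ Dstep u Δ S T) :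
    a ∈ BRstep u {a | (k + 1, a) ∈ S} {b | (k, b) ∈ T} := by
  obtain ⟨hS, h0 | ⟨μ, hμ, hsupp, hbr⟩⟩ := h
  · exact absurd h0 k.succ_ne_zero
  refine ⟨hS, margAct μ, margAct_isDist μ, fun b hb => ?_, hbr⟩
  obtain ⟨t, hmt, hct⟩ := exists_of_margAct_ne_zero hb
  obtain rfl : t = k := hΔ μ hμ t hmt
  exact hsupp t b hmt hct

theorem L_respects_rationalizability_general {A B : Type} [Fintype A] [Fintype B]
    (u1 : A → B → ℝ) (u2 : B → A → ℝ) (p1 : A → ℝ) (p2 : B → ℝ)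
    (n k : ℕ) (hk : n ≤ k) :
    LSet u1 u2 p1 p2 n k ⊆ (Rseq u1 u2 n).1 ∧
    LSet2 u1 u2 p1 p2 n k ⊆ (Rseq u1 u2 n).2 := by
  induction n generalizing k with
  | zero => exact ⟨Set.subset_univ _, Set.subset_univ _⟩
  | succ n ih =>
    obtain ⟨j, rfl⟩ : ∃ j, k = j + 1 := ⟨k - 1, by omega⟩
    have ih_same := ih (j + 1) (by omega)
    have ih_lower := ih j (by omega)
    exact ⟨fun a ha => BRstep_mono ih_same.1 ih_lower.2
        (mem_BRstep_of_mem_Dstep (fun _ hμ => hμ.2.2) ha),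
      fun b hb => BRstep_mono ih_same.2 ih_lower.1
        (mem_BRstep_of_mem_Dstep (fun _ hμ => hμ.2.2) hb)⟩

/-- L-rationalizability respects `n`-rationalizability: for `k ≥ n`,
the `n`-L-rationalizable actions of type `θ_{i,k}` are `n`-rationalizable. -/
theorem L_respects_rationalizability {A B : Type} [Fintype A] [Fintype B]
    (u1 : A → B → ℝ) (u2 : B → A → ℝ) (p1 : A → ℝ) (p2 : B → ℝ)
    (hp1 : IsDist p1) (hp2 : IsDist p2) (n k : ℕ) (hk : n ≤ k) :
    LSet u1 u2 p1 p2 n k ⊆ (Rseq u1 u2 n).1 ∧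
    LSet2 u1 u2 p1 p2 n k ⊆ (Rseq u1 u2 n).2 :=
  L_respects_rationalizability_general u1 u2 p1 p2 n k hk
end

section
/- Characterization of L-rationalizability: fix an anchor p. For every level k ≥ 1, reasoning order n ≥ 0, and player i: if n < k then the set of n-L-rationalizable actions of type θ_{i,k} equals R^n_i (the n-rationalizable actions of the complete-information game), and if n ≥ k it equals L^k_i[p], the classic level-k behavior of player i under anchor p. -/
open Finset

/-!
Under (KL) a type `θ_{i,k}` with `k ≥ 1` is certain that the co-player has type `k - 1`, so its
conjectures are just distributions over the actions surviving for type `θ_{-i,k-1}` (for `k = 1`: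
the anchor). Hence the level-`k` slices obey `L^{n+1}_k = L^n_k ∩ BR(L^n_{k-1})`, which is the
recursion of rationalizability as long as `n < k`. At `n = k` the lower level has settled at
`L^{k-1}[p]`, giving `R^{k-1} ∩ L^k[p] = L^k[p]` because level-`k` play is `(k-1)`-rationalizable;
from then on nothing changes.
-/

section Conjectures

variable {B : Type} [Fintype B]

noncomputable def GConj.pure (t : ℕ) (ν : B → ℝ) (hν : IsDist ν) : GConj B where
  m := Finsupp.single t 1
  m_nonneg s := by
    rw [Finsupp.single_apply]
    split_ifs <;> norm_num
  m_sum := by simp [Finsupp.sum_single_index]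
  cond _ := ν
  cond_dist _ := hν

theorem GConj.pure_m_ne_zero {t s : ℕ} {ν : B → ℝ} {hν : IsDist ν} :
    (GConj.pure t ν hν).m s ≠ 0 ↔ s = t := by
  simp [GConj.pure, Finsupp.single_apply_ne_zero]

theorem GConj.m_eq_single_of_support {μ : GConj B} {t : ℕ} (h : ∀ s, μ.m s ≠ 0 → s = t) :
    μ.m = Finsupp.single t 1 := by
  have hsupp : μ.m.support ⊆ {t} := fun s hs => Finset.mem_singleton.2 (h s (by simpa using hs))
  have hmt : μ.m = Finsupp.single t (μ.m t) := Finsupp.eq_single_iff.2 ⟨hsupp, rfl⟩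
  have hsum := μ.m_sum
  rw [hmt, Finsupp.sum_single_index rfl] at hsum
  rwa [hsum] at hmt

theorem margAct_of_m_eq_single {μ : GConj B} {t : ℕ} (h : μ.m = Finsupp.single t 1) :
    margAct μ = μ.cond t := by
  funext b
  simp [margAct, h, Finsupp.sum_single_index]

theorem margAct_pure (t : ℕ) (ν : B → ℝ) (hν : IsDist ν) : margAct (GConj.pure t ν hν) = ν :=
  margAct_of_m_eq_single rfl

end Conjectures

section Steps

variable {A B : Type} [Fintype A] [Fintype B]

theorem BRstep_eq_inter_Lstep (u : A → B → ℝ) (S : Set A) (T : Set B) :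
    BRstep u S T = S ∩ Lstep u T :=
  rfl

theorem Lstep_mono (u : A → B → ℝ) : Monotone (Lstep u) :=
  fun _ _ hTT' _ ⟨ν, hν, hsupp, hBR⟩ => ⟨ν, hν, fun b hb => hTT' (hsupp b hb), hBR⟩

theorem mem_Dstep_LR_iff (u : A → B → ℝ) (q : B → ℝ) (S : Set (ℕ × A)) (T : Set (ℕ × B))
    {k : ℕ} (hk : 1 ≤ k) (a : A) :
    (k, a) ∈ Dstep u (LR q) S T ↔ (k, a) ∈ S ∧ ∃ ν : B → ℝ, IsDist ν ∧ (k = 1 → ν = q) ∧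
      (∀ b, ν b ≠ 0 → (k - 1, b) ∈ T) ∧ isBR u ν a := by
  refine and_congr_right fun _ => ⟨?_, ?_⟩
  · rintro (hk0 | ⟨μ, ⟨hK1, -, hKL⟩, hsupp, hBR⟩)
    · omega
    have hm := GConj.m_eq_single_of_support hKL
    have hm_ne : μ.m (k - 1) ≠ 0 := by simp [hm]
    refine ⟨μ.cond (k - 1), μ.cond_dist _, fun hk1 => ?_, fun b hb => hsupp _ b hm_ne hb, ?_⟩
    · subst hk1
      exact hK1 hm_ne
    · rwa [margAct_of_m_eq_single hm] at hBR
  · rintro ⟨ν, hν, hq, hsupp, hBR⟩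
    refine Or.inr ⟨GConj.pure (k - 1) ν hν, ⟨fun h0 => ?_, fun t ht => ?_, fun t ht => ?_⟩,
      fun t b ht hb => ?_, by rwa [margAct_pure]⟩
    · exact hq (by have := GConj.pure_m_ne_zero.1 h0; omega)
    · have := GConj.pure_m_ne_zero.1 ht; omega
    · exact GConj.pure_m_ne_zero.1 ht
    · rw [GConj.pure_m_ne_zero.1 ht]
      exact hsupp b hb

theorem preimage_Dstep_LR_one (u : A → B → ℝ) {q : B → ℝ} (hq : IsDist q)
    (S : Set (ℕ × A)) {T : Set (ℕ × B)} (hT : ∀ b, (0, b) ∈ T) :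
    Prod.mk 1 ⁻¹' Dstep u (LR q) S T = Prod.mk 1 ⁻¹' S ∩ {a | isBR u q a} := by
  ext a
  rw [Set.mem_preimage, mem_Dstep_LR_iff u q S T le_rfl]
  exact and_congr_right fun _ =>
    ⟨fun ⟨ν, _, hνq, _, hBR⟩ => hνq rfl ▸ hBR, fun hBR => ⟨q, hq, fun _ => rfl, fun b _ => hT b, hBR⟩⟩

theorem preimage_Dstep_LR_add_two (u : A → B → ℝ) (q : B → ℝ) (S : Set (ℕ × A))
    (T : Set (ℕ × B)) (j : ℕ) :
    Prod.mk (j + 2) ⁻¹' Dstep u (LR q) S T =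
      Prod.mk (j + 2) ⁻¹' S ∩ Lstep u (Prod.mk (j + 1) ⁻¹' T) := by
  ext a
  rw [Set.mem_preimage, mem_Dstep_LR_iff u q S T (by omega)]
  exact and_congr_right fun _ =>
    ⟨fun ⟨ν, hν, _, hsupp, hBR⟩ => ⟨ν, hν, hsupp, hBR⟩,
      fun ⟨ν, hν, hsupp, hBR⟩ => ⟨ν, hν, by omega, hsupp, hBR⟩⟩

theorem zero_mem_DeltaRat (u1 : A → B → ℝ) (u2 : B → A → ℝ)
    (Δ1 : ℕ → GConj B → Prop) (Δ2 : ℕ → GConj A → Prop) (n : ℕ) :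
    (∀ a, (0, a) ∈ (DeltaRat u1 u2 Δ1 Δ2 n).1) ∧ (∀ b, (0, b) ∈ (DeltaRat u1 u2 Δ1 Δ2 n).2) := by
  induction n with
  | zero => exact ⟨fun _ => trivial, fun _ => trivial⟩
  | succ n ih => exact ⟨fun a => ⟨ih.1 a, Or.inl rfl⟩, fun b => ⟨ih.2 b, Or.inl rfl⟩⟩

end Steps

section Symmetry

variable {A B : Type} [Fintype A] [Fintype B]

theorem DeltaRat_swap (u1 : A → B → ℝ) (u2 : B → A → ℝ)
    (Δ1 : ℕ → GConj B → Prop) (Δ2 : ℕ → GConj A → Prop) (n : ℕ) :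
    DeltaRat u2 u1 Δ2 Δ1 n = (DeltaRat u1 u2 Δ1 Δ2 n).swap := by
  induction n with
  | zero => rfl
  | succ n ih => rw [DeltaRat, DeltaRat, ih]; rfl

theorem Rseq_swap (u1 : A → B → ℝ) (u2 : B → A → ℝ) (n : ℕ) :
    Rseq u2 u1 n = (Rseq u1 u2 n).swap := by
  induction n with
  | zero => rfl
  | succ n ih => rw [Rseq, Rseq, ih]; rfl

theorem Lk_swap (u1 : A → B → ℝ) (u2 : B → A → ℝ) (p1 : A → ℝ) (p2 : B → ℝ) (k : ℕ) :
    Lk u2 u1 p2 p1 k = (Lk u1 u2 p1 p2 k).swap := by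
  induction k with
  | zero => rfl
  | succ k ih =>
    cases k with
    | zero => rfl
    | succ k => rw [Lk, Lk, ih]; rfl

theorem LSet2_eq_LSet_swap (u1 : A → B → ℝ) (u2 : B → A → ℝ) (p1 : A → ℝ) (p2 : B → ℝ)
    (n k : ℕ) : LSet2 u1 u2 p1 p2 n k = LSet u2 u1 p2 p1 n k := by
  rw [LSet, DeltaRat_swap]
  rfl

end Symmetry

section LRationalizability

variable {A B : Type} [Fintype A] [Fintype B] (u1 : A → B → ℝ) (u2 : B → A → ℝ) (p1 : A → ℝ)

theorem LSet_succ_one {p2 : B → ℝ} (hp2 : IsDist p2) (n : ℕ) :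
    LSet u1 u2 p1 p2 (n + 1) 1 = LSet u1 u2 p1 p2 n 1 ∩ {a | isBR u1 p2 a} :=
  preimage_Dstep_LR_one u1 hp2 _ (zero_mem_DeltaRat u1 u2 (LR p2) (LR p1) n).2

theorem LSet_succ_add_two (p2 : B → ℝ) (n j : ℕ) :
    LSet u1 u2 p1 p2 (n + 1) (j + 2) =
      LSet u1 u2 p1 p2 n (j + 2) ∩ Lstep u1 (LSet2 u1 u2 p1 p2 n (j + 1)) :=
  preimage_Dstep_LR_add_two u1 p2 _ _ j

end LRationalizability

section Rationalizability

variable {A B : Type} [Fintype A] [Fintype B] (u1 : A → B → ℝ) (u2 : B → A → ℝ)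

theorem Rseq_succ_eq_Lstep (n : ℕ) :
    Rseq u1 u2 (n + 1) = (Lstep u1 (Rseq u1 u2 n).2, Lstep u2 (Rseq u1 u2 n).1) := by
  suffices h : ∀ n, Lstep u1 (Rseq u1 u2 n).2 ⊆ (Rseq u1 u2 n).1 ∧
      Lstep u2 (Rseq u1 u2 n).1 ⊆ (Rseq u1 u2 n).2 by
    rw [Rseq, BRstep_eq_inter_Lstep, BRstep_eq_inter_Lstep, Set.inter_eq_right.2 (h n).1,
      Set.inter_eq_right.2 (h n).2]
  intro n
  induction n with
  | zero => exact ⟨Set.subset_univ _, Set.subset_univ _⟩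
  | succ n ih =>
    have h1 : Lstep u1 (Rseq u1 u2 (n + 1)).2 ⊆ Lstep u1 (Rseq u1 u2 n).2 :=
      Lstep_mono u1 Set.inter_subset_left
    have h2 : Lstep u2 (Rseq u1 u2 (n + 1)).1 ⊆ Lstep u2 (Rseq u1 u2 n).1 :=
      Lstep_mono u2 Set.inter_subset_left
    exact ⟨Set.subset_inter (h1.trans ih.1) h1, Set.subset_inter (h2.trans ih.2) h2⟩

theorem Lk_succ_le_Rseq (p1 : A → ℝ) (p2 : B → ℝ) (k : ℕ) :
    Lk u1 u2 p1 p2 (k + 1) ≤ Rseq u1 u2 k := by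
  induction k with
  | zero => exact ⟨Set.subset_univ _, Set.subset_univ _⟩
  | succ k ih =>
    rw [Rseq_succ_eq_Lstep]
    exact ⟨Lstep_mono u1 ih.2, Lstep_mono u2 ih.1⟩

end Rationalizability

theorem LSet_eq {A B : Type} [Fintype A] [Fintype B] (n : ℕ)
    (u1 : A → B → ℝ) (u2 : B → A → ℝ) (p1 : A → ℝ) (p2 : B → ℝ)
    (hp1 : IsDist p1) (hp2 : IsDist p2) (k : ℕ) (hk : 1 ≤ k) :
    LSet u1 u2 p1 p2 n k = if n < k then (Rseq u1 u2 n).1 else (Lk u1 u2 p1 p2 k).1 := by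
  induction n generalizing A B k with
  | zero => rw [if_pos (show 0 < k from hk)]; rfl
  | succ n ih =>
    obtain rfl | ⟨j, rfl⟩ : k = 1 ∨ ∃ j, k = j + 2 := by
      rcases k with _ | _ | j <;> simp_all
    · have hLk : (Lk u1 u2 p1 p2 1).1 ⊆ LSet u1 u2 p1 p2 n 1 := by
        rw [ih u1 u2 p1 p2 hp1 hp2 1 le_rfl]
        split_ifs with hn
        · obtain rfl : n = 0 := by omega
          exact Set.subset_univ _
        · exact subset_rfl
      rw [if_neg (by omega), LSet_succ_one u1 u2 p1 hp2]
      exact Set.inter_eq_right.2 hLk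
    · rw [LSet_succ_add_two, LSet2_eq_LSet_swap,
        ih u1 u2 p1 p2 hp1 hp2 _ (by omega), ih u2 u1 p2 p1 hp2 hp1 _ (by omega),
        Rseq_swap u1 u2, Lk_swap u1 u2 p1 p2, Prod.fst_swap, Prod.fst_swap]
      rcases lt_trichotomy n (j + 1) with hn | rfl | hn
      · rw [if_pos (by omega), if_pos hn, if_pos (by omega)]
        rfl
      · rw [if_pos (by omega), if_neg (by omega), if_neg (by omega)]
        exact Set.inter_eq_right.2 (Lk_succ_le_Rseq u1 u2 p1 p2 (j + 1)).1
      · rw [if_neg (by omega), if_neg (by omega), if_neg (by omega)]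
        exact Set.inter_self _

theorem LSet2_eq {A B : Type} [Fintype A] [Fintype B] (n : ℕ)
    (u1 : A → B → ℝ) (u2 : B → A → ℝ) (p1 : A → ℝ) (p2 : B → ℝ)
    (hp1 : IsDist p1) (hp2 : IsDist p2) (k : ℕ) (hk : 1 ≤ k) :
    LSet2 u1 u2 p1 p2 n k = if n < k then (Rseq u1 u2 n).2 else (Lk u1 u2 p1 p2 k).2 := by
  rw [LSet2_eq_LSet_swap, LSet_eq n u2 u1 p2 p1 hp2 hp1 k hk, Rseq_swap u1 u2,
    Lk_swap u1 u2 p1 p2, Prod.fst_swap, Prod.fst_swap]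

/-- characterization of L-rationalizability: for `k ≥ 1`, if `n < k` it
equals `n`-rationalizability, and if `n ≥ k` it equals classic level-`k` behavior. -/
theorem L_characterization {A B : Type} [Fintype A] [Fintype B]
    (u1 : A → B → ℝ) (u2 : B → A → ℝ) (p1 : A → ℝ) (p2 : B → ℝ)
    (hp1 : IsDist p1) (hp2 : IsDist p2) (k : ℕ) (hk : 1 ≤ k) (n : ℕ) :
    (n < k →
      LSet u1 u2 p1 p2 n k = (Rseq u1 u2 n).1 ∧
      LSet2 u1 u2 p1 p2 n k = (Rseq u1 u2 n).2) ∧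
    (k ≤ n →
      LSet u1 u2 p1 p2 n k = (Lk u1 u2 p1 p2 k).1 ∧
      LSet2 u1 u2 p1 p2 n k = (Lk u1 u2 p1 p2 k).2) := by
  rw [LSet_eq n u1 u2 p1 p2 hp1 hp2 k hk, LSet2_eq n u1 u2 p1 p2 hp1 hp2 k hk]
  exact ⟨fun h => ⟨if_pos h, if_pos h⟩, fun h => ⟨if_neg (by omega), if_neg (by omega)⟩⟩
end

section
/- Nonemptiness: fix an anchor p in a finite two-player game. For every player i, every level k ≥ 0, and every reasoning order n (including n = ∞), the set of n-L-rationalizable actions of type θ_{i,k} is nonempty; consequently the set of n-downward-rationalizable actions of type θ_{i,k} is nonempty as well. -/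
open Finset

section Aux

open Classical in
/-- Point mass on `b0`. -/
noncomputable def pt {B : Type} (b0 : B) : B → ℝ := fun b => if b = b0 then 1 else 0

lemma pt_isDist {B : Type} [Fintype B] (b0 : B) : IsDist (pt b0) := by
  classical
  refine ⟨fun b => ?_, ?_⟩
  · unfold pt; split <;> norm_num
  · simp [pt]

lemma exists_isBR {A B : Type} [Fintype A] [Fintype B] [Nonempty A]
    (u : A → B → ℝ) (ν : B → ℝ) : ∃ a, isBR u ν a := by
  obtain ⟨a, -, ha⟩ := Finset.exists_max_image (Finset.univ : Finset A)
    (fun a => ∑ b, ν b * u a b) ⟨Classical.arbitrary A, Finset.mem_univ _⟩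
  exact ⟨a, fun a' => ha a' (Finset.mem_univ _)⟩

/-- Candidate action sequences: level-`k+1` is a best reply to the anchor (k=0)
or a point conjecture on the co-player's level-`k` action. -/
noncomputable def seqs {A B : Type} [Fintype A] [Fintype B] [Nonempty A] [Nonempty B]
    (u1 : A → B → ℝ) (u2 : B → A → ℝ) (p1 : A → ℝ) (p2 : B → ℝ) : ℕ → A × B
  | 0 => (Classical.arbitrary A, Classical.arbitrary B)
  | k + 1 =>
    ((exists_isBR u1 (if k = 0 then p2 else pt (seqs u1 u2 p1 p2 k).2)).choose,
     (exists_isBR u2 (if k = 0 then p1 else pt (seqs u1 u2 p1 p2 k).1)).choose)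

/-- A Ĝ-conjecture concentrated on type `m0` with constant conditional `c`. -/
noncomputable def ptConj {B : Type} [Fintype B] (m0 : ℕ) (c : B → ℝ) (hc : IsDist c) :
    GConj B where
  m := Finsupp.single m0 1
  m_nonneg := by
    intro t; rw [Finsupp.single_apply]; split <;> norm_num
  m_sum := by
    rw [Finsupp.sum_single_index]; rfl
  cond := fun _ => c
  cond_dist := fun _ => hc

lemma margAct_ptConj {B : Type} [Fintype B] (m0 : ℕ) (c : B → ℝ) (hc : IsDist c) :
    margAct (ptConj m0 c hc) = c := by
  funext b
  show (Finsupp.single m0 1).sum (fun _ w => w * c b) = c b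
  rw [Finsupp.sum_single_index (by ring), one_mul]

lemma ptConj_m_ne_zero {B : Type} [Fintype B] {m0 : ℕ} {c : B → ℝ} {hc : IsDist c}
    {t : ℕ} (h : (ptConj m0 c hc).m t ≠ 0) : t = m0 := by
  by_contra hne
  exact h (Finsupp.single_eq_of_ne' (fun h' => hne h'.symm))

lemma lr_ptConj {B : Type} [Fintype B] (q : B → ℝ) (m : ℕ)
    (c : B → ℝ) (hc : IsDist c) (hc0 : m = 0 → c = q) :
    LR q (m + 1) (ptConj m c hc) := by
  refine ⟨?_, ?_, ?_⟩
  · intro h0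
    have hm : (0 : ℕ) = m := ptConj_m_ne_zero h0
    exact hc0 hm.symm
  · intro t ht
    have := ptConj_m_ne_zero ht
    omega
  · intro t ht
    have := ptConj_m_ne_zero ht
    omega

/-- Type-0 pairs survive every round of Δ-rationalizability. -/
lemma type0_mem {A B : Type} [Fintype A] [Fintype B]
    (u1 : A → B → ℝ) (u2 : B → A → ℝ)
    (Δ1 : ℕ → GConj B → Prop) (Δ2 : ℕ → GConj A → Prop) :
    ∀ n, (∀ a : A, ((0 : ℕ), a) ∈ (DeltaRat u1 u2 Δ1 Δ2 n).1) ∧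
         (∀ b : B, ((0 : ℕ), b) ∈ (DeltaRat u1 u2 Δ1 Δ2 n).2) := by
  intro n
  induction n with
  | zero => exact ⟨fun a => Set.mem_univ _, fun b => Set.mem_univ _⟩
  | succ n ih =>
    exact ⟨fun a => ⟨ih.1 a, Or.inl rfl⟩, fun b => ⟨ih.2 b, Or.inl rfl⟩⟩

/-- The constructed sequences survive every round, under any restrictions weaker than `LR`. -/
lemma seqs_survive {A B : Type} [Fintype A] [Fintype B] [Nonempty A] [Nonempty B]
    (u1 : A → B → ℝ) (u2 : B → A → ℝ) (p1 : A → ℝ) (p2 : B → ℝ)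
    (hp1 : IsDist p1) (hp2 : IsDist p2)
    (Δ1 : ℕ → GConj B → Prop) (Δ2 : ℕ → GConj A → Prop)
    (hΔ1 : ∀ k μ, LR p2 k μ → Δ1 k μ) (hΔ2 : ∀ k μ, LR p1 k μ → Δ2 k μ) :
    ∀ n k, (k, (seqs u1 u2 p1 p2 k).1) ∈ (DeltaRat u1 u2 Δ1 Δ2 n).1 ∧
           (k, (seqs u1 u2 p1 p2 k).2) ∈ (DeltaRat u1 u2 Δ1 Δ2 n).2 := by
  intro n
  induction n with
  | zero => exact fun k => ⟨Set.mem_univ _, Set.mem_univ _⟩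
  | succ n ih =>
    intro k
    match k with
    | 0 => exact ⟨⟨(ih 0).1, Or.inl rfl⟩, ⟨(ih 0).2, Or.inl rfl⟩⟩
    | m + 1 =>
      classical
      -- player 1 part
      have hc2 : IsDist (if m = 0 then p2 else pt (seqs u1 u2 p1 p2 m).2) := by
        split
        · exact hp2
        · exact pt_isDist _
      have hc1 : IsDist (if m = 0 then p1 else pt (seqs u1 u2 p1 p2 m).1) := by
        split
        · exact hp1
        · exact pt_isDist _
      refine ⟨⟨(ih (m + 1)).1, Or.inr ⟨ptConj m _ hc2, ?_, ?_, ?_⟩⟩,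
              ⟨(ih (m + 1)).2, Or.inr ⟨ptConj m _ hc1, ?_, ?_, ?_⟩⟩⟩
      · exact hΔ1 _ _ (lr_ptConj p2 m _ hc2 (fun hm => by simp [hm]))
      · intro t b htm hcb
        have ht : t = m := ptConj_m_ne_zero htm
        subst ht
        by_cases hm : t = 0
        · subst hm
          exact (type0_mem u1 u2 Δ1 Δ2 n).2 b
        · have hb : b = (seqs u1 u2 p1 p2 t).2 := by
            by_contra hb
            apply hcb
            show (if t = 0 then p2 else pt (seqs u1 u2 p1 p2 t).2) b = 0
            rw [if_neg hm]
            exact if_neg hb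
          rw [hb]
          exact (ih t).2
      · rw [margAct_ptConj]
        exact (exists_isBR u1 (if m = 0 then p2 else pt (seqs u1 u2 p1 p2 m).2)).choose_spec
      · exact hΔ2 _ _ (lr_ptConj p1 m _ hc1 (fun hm => by simp [hm]))
      · intro t a htm hca
        have ht : t = m := ptConj_m_ne_zero htm
        subst ht
        by_cases hm : t = 0
        · subst hm
          exact (type0_mem u1 u2 Δ1 Δ2 n).1 a
        · have ha : a = (seqs u1 u2 p1 p2 t).1 := by
            by_contra ha
            apply hca
            show (if t = 0 then p1 else pt (seqs u1 u2 p1 p2 t).1) a = 0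
            rw [if_neg hm]
            exact if_neg ha
          rw [ha]
          exact (ih t).1
      · rw [margAct_ptConj]
        exact (exists_isBR u2 (if m = 0 then p1 else pt (seqs u1 u2 p1 p2 m).1)).choose_spec

end Aux

/-- nonemptiness of L-rationalizability and downward rationalizability
at every type level `k` and every order `n` (including `n = ∞`). -/
theorem L_and_downward_nonempty {A B : Type} [Fintype A] [Fintype B]
    [Nonempty A] [Nonempty B]
    (u1 : A → B → ℝ) (u2 : B → A → ℝ) (p1 : A → ℝ) (p2 : B → ℝ)
    (hp1 : IsDist p1) (hp2 : IsDist p2) (k : ℕ) :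
    (∀ n : ℕ, (LSet u1 u2 p1 p2 n k).Nonempty ∧ (LSet2 u1 u2 p1 p2 n k).Nonempty) ∧
    (LSetInf u1 u2 p1 p2 k).Nonempty ∧ (LSet2Inf u1 u2 p1 p2 k).Nonempty ∧
    (∀ n : ℕ, (DSet u1 u2 p1 p2 n k).Nonempty ∧ (DSet2 u1 u2 p1 p2 n k).Nonempty) ∧
    (DSetInf u1 u2 p1 p2 k).Nonempty ∧ (DSet2Inf u1 u2 p1 p2 k).Nonempty := by
  have hL := seqs_survive u1 u2 p1 p2 hp1 hp2 (LR p2) (LR p1)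
    (fun _ _ h => h) (fun _ _ h => h)
  have hD := seqs_survive u1 u2 p1 p2 hp1 hp2 (DownR p2) (DownR p1)
    (fun _ _ h => ⟨h.1, h.2.1⟩) (fun _ _ h => ⟨h.1, h.2.1⟩)
  exact ⟨fun n => ⟨⟨_, (hL n k).1⟩, ⟨_, (hL n k).2⟩⟩,
    ⟨_, Set.mem_iInter.2 fun n => (hL n k).1⟩,
    ⟨_, Set.mem_iInter.2 fun n => (hL n k).2⟩,
    fun n => ⟨⟨_, (hD n k).1⟩, ⟨_, (hD n k).2⟩⟩,
    ⟨_, Set.mem_iInter.2 fun n => (hD n k).1⟩,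
    ⟨_, Set.mem_iInter.2 fun n => (hD n k).2⟩⟩
end
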